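/- arXiv:math/0004050 — 2 statements merged into one kernel-verified Lean document; each statement's English description precedes it below -/
import Mathlib

section
/- Let R be a commutative ring and let φ be a formal power series in countably many variables x₁, x₂, … over R with constant term 1, such that for all interleavings φ(x₁,…,xₙ,…)·φ(y₁,…,yₙ,…) = φ(x₁,y₁,x₂,y₂,…) (as power series in the doubled set of variables), where each φ involves only finitely many variables in each homogeneous component. Then φ(x₁,x₂,…) = ∏_{i≥1} h(xᵢ) where h(t) := φ(t,0,0,…) ∈ R[[t]] has constant term 1. -/
noncomputable section

open scoped Classical

/-- Renaming of variables of a power series in countably many variables along an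
injective map `r`: the variable `xᵢ` is sent to `x_{r i}` (equivalently, substitution
of `X (r i)` for the `i`-th variable). -/
def MvPowerSeries.renameVars {R : Type*} [CommRing R] (r : ℕ → ℕ)
    (hr : Function.Injective r) (φ : MvPowerSeries ℕ R) : MvPowerSeries ℕ R :=
  fun d =>
    if h : (d.support : Set ℕ) ⊆ Set.range r then
      φ (Finsupp.comapDomain r d hr.injOn)
    else 0

/-- The one-variable power series `h(t) := φ(t, 0, 0, …)` obtained from a power series
`φ` in countably many variables by setting all variables but the first to zero. -/
def MvPowerSeries.firstVar {R : Type*} [CommRing R] (φ : MvPowerSeries ℕ R) :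
    PowerSeries R :=
  PowerSeries.mk fun k => MvPowerSeries.coeff (Finsupp.single 0 k) φ
section Aux

variable {R : Type*} [CommRing R]

private lemma coeff_renameVars_eq (r : ℕ → ℕ) (hr : Function.Injective r)
    (φ : MvPowerSeries ℕ R) (d : ℕ →₀ ℕ) (h : (d.support : Set ℕ) ⊆ Set.range r) :
    MvPowerSeries.coeff d (MvPowerSeries.renameVars r hr φ) =
      MvPowerSeries.coeff (Finsupp.comapDomain r d hr.injOn) φ := by
  show MvPowerSeries.renameVars r hr φ d = _
  rw [MvPowerSeries.renameVars, dif_pos h]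
  rfl

private lemma coeff_renameVars_ne (r : ℕ → ℕ) (hr : Function.Injective r)
    (φ : MvPowerSeries ℕ R) (d : ℕ →₀ ℕ) (h : ¬ (d.support : Set ℕ) ⊆ Set.range r) :
    MvPowerSeries.coeff d (MvPowerSeries.renameVars r hr φ) = 0 := by
  show MvPowerSeries.renameVars r hr φ d = _
  rw [MvPowerSeries.renameVars, dif_neg h]

end Aux

/-- If `φ` is a power series in countably many variables `x₀, x₁, …` with constant
term `1` satisfying the interleaving relation
`φ(x₀, x₁, …) · φ(y₀, y₁, …) = φ(x₀, y₀, x₁, y₁, …)` (with the `x`'s placed in the even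
variables and the `y`'s in the odd variables), then `φ(x₀, x₁, …) = ∏ᵢ h(xᵢ)` where
`h(t) = φ(t, 0, 0, …)` has constant term `1`; coefficientwise, the coefficient of the
monomial `∏ xᵢ^{dᵢ}` in `φ` is `∏_{i ∈ supp d} (coefficient of t^{dᵢ} in h)`. -/
theorem multiplicative_series_is_product {R : Type*} [CommRing R]
    (φ : MvPowerSeries ℕ R) (hconst : MvPowerSeries.constantCoeff φ = 1)
    (hmul : MvPowerSeries.renameVars (fun i => 2 * i) (fun a b hab => by simp only [] at hab; omega) φ *
        MvPowerSeries.renameVars (fun i => 2 * i + 1) (fun a b hab => by simp only [] at hab; omega) φ = φ) :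
    PowerSeries.constantCoeff φ.firstVar = 1 ∧
    ∀ d : ℕ →₀ ℕ, MvPowerSeries.coeff d φ =
      ∏ i ∈ d.support, PowerSeries.coeff (d i) φ.firstVar := by
  have he : Function.Injective (fun i => 2 * i : ℕ → ℕ) := fun a b hab => by
    simp only [] at hab; omega
  have ho : Function.Injective (fun i => 2 * i + 1 : ℕ → ℕ) := fun a b hab => by
    simp only [] at hab; omega
  have hev : ∀ i : ℕ, Even (2 * i) := fun i => ⟨i, by omega⟩
  have hodd : ∀ i : ℕ, ¬ Even (2 * i + 1) := fun i => by rw [Nat.even_iff]; omega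
  have hc0 : PowerSeries.constantCoeff φ.firstVar = 1 := by
    rw [MvPowerSeries.firstVar, PowerSeries.constantCoeff_mk, Finsupp.single_zero,
      MvPowerSeries.coeff_zero_eq_constantCoeff]
    exact hconst
  refine ⟨hc0, ?_⟩
  -- the splitting of a coefficient into even and odd parts
  have split : ∀ d : ℕ →₀ ℕ, MvPowerSeries.coeff d φ =
      MvPowerSeries.coeff (Finsupp.comapDomain (fun i => 2 * i) d he.injOn) φ *
      MvPowerSeries.coeff (Finsupp.comapDomain (fun i => 2 * i + 1) d ho.injOn) φ := by
    intro d
    conv_lhs => rw [← hmul]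
    rw [MvPowerSeries.coeff_mul]
    set de := Finsupp.filter (fun j => Even j) d with hde
    set dod := Finsupp.filter (fun j => ¬ Even j) d with hdod
    have hsum : de + dod = d := by
      ext j
      simp only [Finsupp.add_apply, hde, hdod, Finsupp.filter_apply]
      split <;> simp
    have hdeS : ((de.support : Set ℕ)) ⊆ Set.range (fun i => 2 * i : ℕ → ℕ) := by
      intro j hj
      have hj' : de j ≠ 0 := Finsupp.mem_support_iff.mp hj
      rw [hde, Finsupp.filter_apply] at hj'
      by_cases h : Even j
      · obtain ⟨k, hk⟩ := h; exact ⟨k, by simp only []; omega⟩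
      · simp [h] at hj'
    have hdodS : ((dod.support : Set ℕ)) ⊆ Set.range (fun i => 2 * i + 1 : ℕ → ℕ) := by
      intro j hj
      have hj' : dod j ≠ 0 := Finsupp.mem_support_iff.mp hj
      rw [hdod, Finsupp.filter_apply] at hj'
      by_cases h : Even j
      · simp [h] at hj'
      · obtain ⟨k, hk⟩ := Nat.not_even_iff_odd.mp h
        exact ⟨k, by simp only []; omega⟩
    rw [Finset.sum_eq_single (de, dod)]
    · have h1 : Finsupp.comapDomain (fun i => 2 * i) de he.injOn =
          Finsupp.comapDomain (fun i => 2 * i) d he.injOn := by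
        ext i
        simp only [Finsupp.comapDomain_apply, hde, Finsupp.filter_apply]
        simp [hev i]
      have h2 : Finsupp.comapDomain (fun i => 2 * i + 1) dod ho.injOn =
          Finsupp.comapDomain (fun i => 2 * i + 1) d ho.injOn := by
        ext i
        simp only [Finsupp.comapDomain_apply, hdod, Finsupp.filter_apply]
        simp [hodd i]
      dsimp only
      erw [coeff_renameVars_eq _ _ _ _ hdeS, coeff_renameVars_eq _ _ _ _ hdodS, h1, h2]
    · rintro ⟨a, b⟩ hab hne
      dsimp only
      have habd : a + b = d := Finset.HasAntidiagonal.mem_antidiagonal.mp hab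
      by_cases hA : (a.support : Set ℕ) ⊆ Set.range (fun i => 2 * i : ℕ → ℕ)
      · by_cases hB : (b.support : Set ℕ) ⊆ Set.range (fun i => 2 * i + 1 : ℕ → ℕ)
        · exfalso
          apply hne
          have haev : ∀ j, ¬ Even j → a j = 0 := by
            intro j hj
            by_contra h
            obtain ⟨k, hk⟩ := hA (Finsupp.mem_support_iff.mpr h)
            simp only [] at hk
            exact hj (hk ▸ hev k)
          have hbod : ∀ j, Even j → b j = 0 := by
            intro j hj
            by_contra h
            obtain ⟨k, hk⟩ := hB (Finsupp.mem_support_iff.mpr h)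
            simp only [] at hk
            exact (hodd k) (hk ▸ hj)
          have ha : a = de := by
            ext j
            rw [hde, Finsupp.filter_apply]
            by_cases h : Even j
            · rw [if_pos h, ← habd, Finsupp.add_apply, hbod j h, add_zero]
            · rw [if_neg h, haev j h]
          have hb : b = dod := by
            ext j
            rw [hdod, Finsupp.filter_apply]
            by_cases h : Even j
            · rw [if_neg (by simpa using h), hbod j h]
            · rw [if_pos h, ← habd, Finsupp.add_apply, haev j h, zero_add]
          rw [ha, hb]
        · erw [coeff_renameVars_ne _ _ _ _ hB, mul_zero]
      · erw [coeff_renameVars_ne _ _ _ _ hA, zero_mul]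
    · intro h
      exact absurd (Finset.HasAntidiagonal.mem_antidiagonal.mpr hsum) h
  -- strong induction on the weighted measure of the support
  have key : ∀ n : ℕ, ∀ d : ℕ →₀ ℕ, d.support.sum id = n →
      MvPowerSeries.coeff d φ = ∏ i ∈ d.support, PowerSeries.coeff (d i) φ.firstVar := by
    intro n
    induction n using Nat.strong_induction_on with
    | _ n ih =>
      intro d hd
      by_cases hn : n = 0
      · -- support is contained in {0}
        subst hn
        have hsupp : ∀ j ∈ d.support, j = 0 := by
          intro j hj
          have := Finset.sum_eq_zero_iff.mp hd j hj
          simpa using this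
        have hd0 : d = Finsupp.single 0 (d 0) := by
          ext j
          rcases eq_or_ne j 0 with rfl | hj
          · simp
          · rw [Finsupp.single_apply, if_neg (Ne.symm hj)]
            by_contra h
            exact hj (hsupp j (Finsupp.mem_support_iff.mpr h))
        rcases eq_or_ne (d 0) 0 with h0 | h0
        · rw [hd0, h0, Finsupp.single_zero]
          simp only [Finsupp.support_zero, Finset.prod_empty]
          rw [MvPowerSeries.coeff_zero_eq_constantCoeff]
          exact hconst
        · rw [hd0]
          rw [Finsupp.support_single_ne_zero _ h0]
          rw [Finset.prod_singleton, Finsupp.single_eq_same, MvPowerSeries.firstVar,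
            PowerSeries.coeff_mk]
      · -- split into even and odd parts and use IH
        set de := Finsupp.comapDomain (fun i => 2 * i) d he.injOn with hde
        set dod := Finsupp.comapDomain (fun i => 2 * i + 1) d ho.injOn with hdod
        have hdeapp : ∀ i, de i = d (2 * i) := fun i => Finsupp.comapDomain_apply _ _ _ i
        have hdodapp : ∀ i, dod i = d (2 * i + 1) := fun i => Finsupp.comapDomain_apply _ _ _ i
        have hdemem : ∀ i, i ∈ de.support ↔ 2 * i ∈ d.support := by
          intro i
          rw [Finsupp.mem_support_iff, Finsupp.mem_support_iff, hdeapp]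
        have hdodmem : ∀ i, i ∈ dod.support ↔ 2 * i + 1 ∈ d.support := by
          intro i
          rw [Finsupp.mem_support_iff, Finsupp.mem_support_iff, hdodapp]
        have hnpos : 0 < n := Nat.pos_of_ne_zero hn
        -- measure bounds
        have hbound : ∀ (e : ℕ →₀ ℕ) (r : ℕ → ℕ), (∀ i, i ∈ e.support ↔ r i ∈ d.support) →
            (∀ i, 2 * i ≤ r i) → Function.Injective r → 2 * e.support.sum id ≤ n := by
          intro e r hmem hle hrinj
          have h1 : ∑ i ∈ e.support, r i ≤ d.support.sum id := by
            have himg : ∑ j ∈ e.support.image r, id j = ∑ i ∈ e.support, id (r i) :=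
              Finset.sum_image (fun x _ y _ h => hrinj h)
            calc ∑ i ∈ e.support, r i = ∑ j ∈ e.support.image r, id j := himg.symm
              _ ≤ d.support.sum id := by
                  apply Finset.sum_le_sum_of_subset
                  intro j hj
                  obtain ⟨i, hi, rfl⟩ := Finset.mem_image.mp hj
                  exact (hmem i).mp hi
          have h2 : 2 * e.support.sum id ≤ ∑ i ∈ e.support, r i := by
            rw [Finset.mul_sum]
            exact Finset.sum_le_sum (fun i _ => hle i)
          rw [← hd]
          omega
        have hdelt : de.support.sum id < n := by
          have := hbound de (fun i => 2 * i) hdemem (fun i => le_refl _) he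
          omega
        have hdodlt : dod.support.sum id < n := by
          have := hbound dod (fun i => 2 * i + 1) hdodmem (fun i => by omega) ho
          omega
        rw [split d, ih _ hdelt de rfl, ih _ hdodlt dod rfl]
        -- now reassemble the product
        rw [← Finset.prod_filter_mul_prod_filter_not d.support (fun j => Even j)]
        congr 1
        · refine Finset.prod_nbij' (fun i => 2 * i) (fun j => j / 2) ?_ ?_ ?_ ?_ ?_
          · intro i hi
            simp only [Finset.mem_filter]
            exact ⟨(hdemem i).mp hi, hev i⟩
          · intro j hj
            simp only [Finset.mem_filter] at hj
            obtain ⟨hj1, k, hk⟩ := hj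
            rw [hdemem]
            have h2 : 2 * (j / 2) = j := by omega
            rwa [h2]
          · intro i _; omega
          · intro j hj
            simp only [Finset.mem_filter] at hj
            obtain ⟨_, k, hk⟩ := hj
            omega
          · intro i _
            rw [hdeapp]
        · refine Finset.prod_nbij' (fun i => 2 * i + 1) (fun j => j / 2) ?_ ?_ ?_ ?_ ?_
          · intro i hi
            simp only [Finset.mem_filter]
            exact ⟨(hdodmem i).mp hi, hodd i⟩
          · intro j hj
            simp only [Finset.mem_filter] at hj
            obtain ⟨hj1, hj2⟩ := hj
            obtain ⟨k, hk⟩ := Nat.not_even_iff_odd.mp hj2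
            rw [hdodmem]
            have h2 : 2 * (j / 2) + 1 = j := by omega
            rwa [h2]
          · intro i _; omega
          · intro j hj
            simp only [Finset.mem_filter] at hj
            obtain ⟨_, hj2⟩ := hj
            obtain ⟨k, hk⟩ := Nat.not_even_iff_odd.mp hj2
            omega
          · intro i _
            rw [hdodapp]
  intro d
  exact key _ d rfl
end
end

section
/- Let R be a nonzero commutative ring. The R-algebra homomorphism R[[c₁,…,cₙ]] → R[[x₁,…,xₙ]] sending each cᵢ to the i-th elementary symmetric polynomial in x₁,…,xₙ is injective. -/
noncomputable section

variable {R : Type*} [CommRing R]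

/-- Composition of one-variable formal power series: `comp f g = f(g(t))`.
This is the correct substitution when `g` has zero constant term. -/
def PowerSeries.comp' (f g : PowerSeries R) : PowerSeries R :=
  PowerSeries.mk fun n =>
    ∑ k ∈ Finset.range (n + 1), PowerSeries.coeff k f * PowerSeries.coeff n (g ^ k)

/-- Truncation of a multivariate power series to total degree `< N`. -/
def MvPowerSeries.truncTot {σ : Type*} [Fintype σ] [DecidableEq σ]
    (N : ℕ) (f : MvPowerSeries σ R) : MvPolynomial σ R :=
  ∑ k ∈ Finset.range N, ∑ e ∈ Finset.finsuppAntidiag (Finset.univ : Finset σ) k,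
    MvPolynomial.monomial e (MvPowerSeries.coeff e f)

/-- Substitution of multivariate power series (with zero constant terms) for the
variables of a multivariate power series. -/
def MvPowerSeries.substAll {σ τ : Type*} [Fintype σ] [DecidableEq σ]
    (a : σ → MvPowerSeries τ R) (f : MvPowerSeries σ R) : MvPowerSeries τ R :=
  fun d => MvPowerSeries.coeff d
    (MvPolynomial.eval₂ (MvPowerSeries.C : R →+* MvPowerSeries τ R) a
      (MvPowerSeries.truncTot (d.sum (fun _ m => m) + 1) f))

/-- Substitution of a multivariate power series `F` (with zero constant term) into a
one-variable power series `f`, i.e. `f(F)`. -/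
def PowerSeries.compMv {σ : Type*} (f : PowerSeries R) (F : MvPowerSeries σ R) :
    MvPowerSeries σ R :=
  fun d => ∑ k ∈ Finset.range (d.sum (fun _ m => m) + 1),
    PowerSeries.coeff k f * MvPowerSeries.coeff d (F ^ k)

open MvPowerSeries in
/-- A (one-dimensional, commutative) formal group law on a commutative ring `R`. -/
def IsFormalGroupLaw (F : MvPowerSeries (Fin 2) R) : Prop :=
  substAll ![X 0, 0] F = X 0 ∧
  substAll ![0, X 1] F = X 1 ∧
  substAll ![X 1, X 0] F = F ∧
  substAll ![substAll ![X 0, X 1] F, X 2] F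
    = substAll ![(X 0 : MvPowerSeries (Fin 3) R), substAll ![X 1, X 2] F] F

open MvPowerSeries in
/-- `ε` is a strict isomorphism of formal group laws from `F` to `G`:
`ε(t) = t + O(t²)` and `ε(F(x,y)) = G(ε(x), ε(y))`. -/
def IsStrictFGLIso (ε : PowerSeries R) (F G : MvPowerSeries (Fin 2) R) : Prop :=
  PowerSeries.constantCoeff ε = 0 ∧ PowerSeries.coeff 1 ε = 1 ∧
  PowerSeries.compMv ε F = substAll (fun i => PowerSeries.compMv ε (X i)) G



namespace EsymmInj

open MvPolynomial Finset

variable (R) in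
/-- The family of elementary symmetric polynomials being substituted. -/
def a (n : ℕ) : Fin n → MvPolynomial (Fin n) R :=
  fun i => esymm (Fin n) R ((i : ℕ) + 1)

/-- The weighted degree: variable `cᵢ` gets weight `i+1`. -/
def w {n : ℕ} (e : Fin n →₀ ℕ) : ℕ := e.sum fun i m => ((i : ℕ) + 1) * m

/-- The product of esymm's corresponding to a monomial `e`. -/
def E (n : ℕ) (e : Fin n →₀ ℕ) : MvPolynomial (Fin n) R :=
  ∏ i, a R n i ^ e i

lemma esymm_isHomogeneous (n k : ℕ) :
    (esymm (Fin n) R k).IsHomogeneous k := by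
  rw [MvPolynomial.esymm]
  apply MvPolynomial.IsHomogeneous.sum
  intro t ht
  have := MvPolynomial.IsHomogeneous.prod t (fun i => (X i : MvPolynomial (Fin n) R))
    (fun _ => 1) (fun i _ => isHomogeneous_X _ _)
  simpa [Finset.sum_const, (Finset.mem_powersetCard.mp ht).2] using this

lemma E_isHomogeneous (n : ℕ) (e : Fin n →₀ ℕ) :
    (E n e : MvPolynomial (Fin n) R).IsHomogeneous (w e) := by
  have h := MvPolynomial.IsHomogeneous.prod (Finset.univ)
    (fun i : Fin n => a R n i ^ e i) (fun i => ((i : ℕ) + 1) * e i)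
    (fun i _ => (esymm_isHomogeneous n ((i : ℕ) + 1)).pow (e i))
  have hw : w e = ∑ i : Fin n, ((i : ℕ) + 1) * e i := by
    rw [w, Finsupp.sum_fintype]
    intro i; simp
  rw [E, hw]; exact h

lemma deg_le_w {n : ℕ} (e : Fin n →₀ ℕ) : (e.sum fun _ m => m) ≤ w e := by
  rw [w, Finsupp.sum, Finsupp.sum]
  exact Finset.sum_le_sum fun i _ => Nat.le_mul_of_pos_left _ (Nat.succ_pos _)

/-- The finite set of exponents of weighted degree `m`. -/
def S (n m : ℕ) : Finset (Fin n →₀ ℕ) :=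
  ((Finset.range (m + 1)).biUnion fun k =>
    Finset.finsuppAntidiag (Finset.univ : Finset (Fin n)) k).filter fun e => w e = m

lemma sum_univ_eq {n : ℕ} (e : Fin n →₀ ℕ) :
    (Finset.univ : Finset (Fin n)).sum e = e.sum fun _ m => m := by
  rw [Finsupp.sum_fintype]
  intro i; rfl

lemma mem_S {n m : ℕ} (e : Fin n →₀ ℕ) : e ∈ S n m ↔ w e = m := by
  constructor
  · exact fun h => (Finset.mem_filter.mp h).2
  · intro h
    refine Finset.mem_filter.mpr ⟨Finset.mem_biUnion.mpr
      ⟨e.sum fun _ m => m, ?_, ?_⟩, h⟩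
    · exact Finset.mem_range.mpr (Nat.lt_succ_of_le (h ▸ deg_le_w e))
    · exact Finset.mem_finsuppAntidiag.mpr ⟨sum_univ_eq e, Finset.subset_univ _⟩

lemma coeff_aeval_truncTot {R : Type*} [CommRing R] (n : ℕ)
    (f : MvPowerSeries (Fin n) R) (N : ℕ) (d : Fin n →₀ ℕ)
    (hN : (d.sum fun _ m => m) < N) :
    MvPolynomial.coeff d (MvPolynomial.aeval (a R n) (MvPowerSeries.truncTot N f))
      = ∑ e ∈ S n (d.sum fun _ m => m),
          MvPowerSeries.coeff e f * MvPolynomial.coeff d (E n e) := by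
  classical
  set m := d.sum fun _ m => m with hm
  have hdisj : ((Finset.range N : Finset ℕ) : Set ℕ).PairwiseDisjoint
      (fun k => Finset.finsuppAntidiag (Finset.univ : Finset (Fin n)) k) := by
    intro k₁ _ k₂ _ hne
    refine Finset.disjoint_left.mpr fun e h1 h2 => hne ?_
    rw [← (Finset.mem_finsuppAntidiag.mp h1).1, ← (Finset.mem_finsuppAntidiag.mp h2).1]
  have step1 : MvPolynomial.coeff d (MvPolynomial.aeval (a R n) (MvPowerSeries.truncTot N f))
      = ∑ e ∈ (Finset.range N).biUnion
          (fun k => Finset.finsuppAntidiag (Finset.univ : Finset (Fin n)) k),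
          MvPowerSeries.coeff e f * MvPolynomial.coeff d (E n e) := by
    rw [MvPowerSeries.truncTot, ← Finset.sum_biUnion hdisj, map_sum,
      MvPolynomial.coeff_sum]
    refine Finset.sum_congr rfl fun e _ => ?_
    rw [aeval_monomial, algebraMap_eq, coeff_C_mul, Finsupp.prod_pow, E]
  rw [step1]
  have hzero : ∀ e ∈ (Finset.range N).biUnion
      (fun k => Finset.finsuppAntidiag (Finset.univ : Finset (Fin n)) k),
      MvPowerSeries.coeff e f * MvPolynomial.coeff d (E n e) ≠ 0 → w e = m := by
    intro e _ hne
    by_contra hw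
    apply hne
    have hdeg : d.degree ≠ w e := fun hc => hw (by rw [← hc]; rfl)
    rw [(E_isHomogeneous n e).coeff_eq_zero hdeg, mul_zero]
  rw [← Finset.sum_filter_of_ne hzero]
  refine Finset.sum_congr ?_ fun _ _ => rfl
  ext e
  simp only [Finset.mem_filter, mem_S, Finset.mem_biUnion, Finset.mem_range,
    Finset.mem_finsuppAntidiag, and_iff_right_iff_imp]
  intro hw
  exact ⟨e.sum fun _ m => m, Nat.lt_of_le_of_lt (hw ▸ deg_le_w e) hN,
    sum_univ_eq e, Finset.subset_univ _⟩

lemma coe_eval₂ {R : Type*} [CommRing R] (n : ℕ) (p : MvPolynomial (Fin n) R) :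
    MvPolynomial.eval₂ ((MvPowerSeries.C : R →+* MvPowerSeries (Fin n) R))
      (fun i : Fin n => ((a R n i : MvPolynomial (Fin n) R) : MvPowerSeries (Fin n) R)) p
      = ((MvPolynomial.aeval (a R n) p : MvPolynomial (Fin n) R) : MvPowerSeries (Fin n) R) := by
  have h1 : (MvPolynomial.coeToMvPowerSeries.ringHom (σ := Fin n) (R := R)).comp
      MvPolynomial.C = (MvPowerSeries.C : R →+* MvPowerSeries (Fin n) R) := by
    ext r
    simp
  have h2 : ((MvPolynomial.coeToMvPowerSeries.ringHom (σ := Fin n) (R := R)) ∘ a R n)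
      = fun i : Fin n => ((a R n i : MvPolynomial (Fin n) R) : MvPowerSeries (Fin n) R) := by
    funext i
    simp
  rw [aeval_def, algebraMap_eq, ← coeToMvPowerSeries.ringHom_apply,
    eval₂_comp_left MvPolynomial.coeToMvPowerSeries.ringHom MvPolynomial.C (a R n) p,
    h1, h2]

/-- The key formula for the coefficients of the substituted series. -/
lemma coeff_substAll {R : Type*} [CommRing R] (n : ℕ)
    (f : MvPowerSeries (Fin n) R) (d : Fin n →₀ ℕ) :
    MvPowerSeries.coeff d (MvPowerSeries.substAll
      (fun i : Fin n => ((a R n i : MvPolynomial (Fin n) R) : MvPowerSeries (Fin n) R)) f)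
      = ∑ e ∈ S n (d.sum fun _ m => m),
          MvPowerSeries.coeff e f * MvPolynomial.coeff d (E n e) := by
  have h0 : (MvPowerSeries.substAll
        (fun i : Fin n => ((a R n i : MvPolynomial (Fin n) R) : MvPowerSeries (Fin n) R)) f) d
      = MvPowerSeries.coeff d (MvPolynomial.eval₂ ((MvPowerSeries.C : R →+* MvPowerSeries (Fin n) R))
          (fun i : Fin n => ((a R n i : MvPolynomial (Fin n) R) : MvPowerSeries (Fin n) R))
          (MvPowerSeries.truncTot ((d.sum fun _ m => m) + 1) f)) := rfl
  rw [MvPowerSeries.coeff_apply, h0, coe_eval₂ n _, MvPolynomial.coeff_coe, coeff_aeval_truncTot n f _ d (Nat.lt_succ_self _)]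

/-- The weighted-degree-`m` part of `f`, as a polynomial. -/
def P {R : Type*} [CommRing R] (n m : ℕ) (f : MvPowerSeries (Fin n) R) :
    MvPolynomial (Fin n) R :=
  ∑ e ∈ S n m, MvPolynomial.monomial e (MvPowerSeries.coeff e f)

lemma coeff_aeval_P {R : Type*} [CommRing R] (n m : ℕ)
    (f : MvPowerSeries (Fin n) R) (d : Fin n →₀ ℕ) :
    MvPolynomial.coeff d (MvPolynomial.aeval (a R n) (P n m f))
      = ∑ e ∈ S n m, MvPowerSeries.coeff e f * MvPolynomial.coeff d (E n e) := by
  rw [P, map_sum, MvPolynomial.coeff_sum]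
  refine Finset.sum_congr rfl fun e _ => ?_
  rw [aeval_monomial, algebraMap_eq, coeff_C_mul, Finsupp.prod_pow, E]

lemma aeval_P_isHomogeneous {R : Type*} [CommRing R] (n m : ℕ)
    (f : MvPowerSeries (Fin n) R) :
    (MvPolynomial.aeval (a R n) (P n m f)).IsHomogeneous m := by
  rw [P, map_sum]
  apply MvPolynomial.IsHomogeneous.sum
  intro e he
  rw [aeval_monomial, algebraMap_eq]
  have : ((C (MvPowerSeries.coeff e f) : MvPolynomial (Fin n) R)).IsHomogeneous 0 :=
    isHomogeneous_C _ _
  have h2 : ((e.prod fun i k => a R n i ^ k : MvPolynomial (Fin n) R)).IsHomogeneous (w e) := by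
    rw [Finsupp.prod_pow]
    exact E_isHomogeneous n e
  have h3 := this.mul h2
  rw [zero_add, (mem_S e).mp he] at h3
  exact h3

end EsymmInj

/-- For a nonzero commutative ring `R`, the `R`-algebra map
`R[[c₁,…,cₙ]] → R[[x₁,…,xₙ]]` sending `cᵢ` to the `i`-th elementary symmetric
polynomial in `x₁,…,xₙ` is injective. -/
theorem esymm_subst_injective (R : Type*) [CommRing R] [Nontrivial R] (n : ℕ) :
    Function.Injective (fun f : MvPowerSeries (Fin n) R =>
      MvPowerSeries.substAll
        (fun i : Fin n =>
          ((MvPolynomial.esymm (Fin n) R ((i : ℕ) + 1) : MvPolynomial (Fin n) R) :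
            MvPowerSeries (Fin n) R)) f) := by
  classical
  intro f g h
  -- the substituted series agree coefficientwise
  have hco : ∀ d : Fin n →₀ ℕ,
      ∑ e ∈ EsymmInj.S n (d.sum fun _ m => m),
          MvPowerSeries.coeff e f * MvPolynomial.coeff d (EsymmInj.E n e)
        = ∑ e ∈ EsymmInj.S n (d.sum fun _ m => m),
          MvPowerSeries.coeff e g * MvPolynomial.coeff d (EsymmInj.E n e) := by
    intro d
    rw [← EsymmInj.coeff_substAll, ← EsymmInj.coeff_substAll]
    exact congrArg (MvPowerSeries.coeff d) h
  -- for each weighted degree m, the evaluated weighted parts agree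
  have hP : ∀ m : ℕ, EsymmInj.P n m f = EsymmInj.P n m g := by
    intro m
    have heval : MvPolynomial.aeval (EsymmInj.a R n) (EsymmInj.P n m f)
        = MvPolynomial.aeval (EsymmInj.a R n) (EsymmInj.P n m g) := by
      apply MvPolynomial.ext
      intro d
      by_cases hd : (d.sum fun _ m => m) = m
      · rw [EsymmInj.coeff_aeval_P, EsymmInj.coeff_aeval_P, ← hd]
        exact hco d
      · have hd' : d.degree ≠ m := hd
        rw [(EsymmInj.aeval_P_isHomogeneous n m f).coeff_eq_zero hd',
          (EsymmInj.aeval_P_isHomogeneous n m g).coeff_eq_zero hd']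
    -- injectivity of aeval at the elementary symmetric polynomials
    have hinj : Function.Injective
        (MvPolynomial.esymmAlgHom (Fin n) R n :
          MvPolynomial (Fin n) R →ₐ[R] _) :=
      MvPolynomial.esymmAlgHom_injective R (by simp)
    apply hinj
    apply Subtype.ext
    rw [MvPolynomial.esymmAlgHom_apply, MvPolynomial.esymmAlgHom_apply]
    exact heval
  -- conclude coefficientwise equality of f and g
  apply MvPowerSeries.ext
  intro e
  have hmem : e ∈ EsymmInj.S n (EsymmInj.w e) := (EsymmInj.mem_S e).mpr rfl
  have hcoeff : ∀ (u : MvPowerSeries (Fin n) R),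
      MvPolynomial.coeff e (EsymmInj.P n (EsymmInj.w e) u) = MvPowerSeries.coeff e u := by
    intro u
    rw [EsymmInj.P, MvPolynomial.coeff_sum, Finset.sum_eq_single e]
    · rw [MvPolynomial.coeff_monomial, if_pos rfl]
    · intro b _ hb
      rw [MvPolynomial.coeff_monomial, if_neg hb]
    · exact fun hc => absurd hmem hc
  rw [← hcoeff f, ← hcoeff g, hP (EsymmInj.w e)]
end
end
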